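/- arXiv:1104.0270 — 2 statements merged into one kernel-verified Lean document; each statement's English description precedes it below -/
import Mathlib

section
/- Work in six-dimensional Euclidean space ℝ^6, and let Δ denote the Laplacian (the trace of the Hessian). Let 0 ≤ σ < 4 and R > 1. Let u : ℝ^6 → ℝ be continuous on the closed annulus {x : 1 ≤ ‖x‖ ≤ R}, twice continuously differentiable on the open annulus {x : 1 < ‖x‖ < R}, and satisfy Δu(x) + σ‖x‖^{-2}·u(x) ≥ 0 for all x in the open annulus. If u(x) ≤ 0 whenever ‖x‖ = 1 and whenever ‖x‖ = R, then u(x) ≤ 0 for every x in the closed annulus. -/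
/-- The Laplacian on `ℝ⁶`: the trace of the Hessian. -/
noncomputable def laplacian (f : EuclideanSpace ℝ (Fin 6) → ℝ)
    (x : EuclideanSpace ℝ (Fin 6)) : ℝ :=
  ∑ i : Fin 6,
    iteratedFDeriv ℝ 2 f x ![EuclideanSpace.single i 1, EuclideanSpace.single i 1]

/-!
Put `h = u * ‖x‖²`. If `u` were positive somewhere, the maximum of `h` over the compact annulus
would be positive, hence attained at an interior point `x₀` since `u ≤ 0` on both spheres. There
the first-order condition in the direction `x₀` gives `Du(x₀) x₀ = -2 u(x₀)`, and the second-order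
conditions along the six coordinate directions add up to `‖x₀‖² Δu + 4 u ≤ 0` at `x₀` (this is
`Δh(x₀) ≤ 0`). The subsolution inequality gives `‖x₀‖² Δu + σ u ≥ 0`, so `(4 - σ) u(x₀) ≤ 0`,
contradicting `σ < 4` and `u(x₀) > 0`.
-/

open Filter Topology

theorem IsLocalMax.second_deriv_nonpos {f f' : ℝ → ℝ} {a b : ℝ} (h : IsLocalMax f a)
    (hf : ∀ᶠ t in 𝓝 a, HasDerivAt f (f' t) t) (hf' : HasDerivAt f' b a) : b ≤ 0 := by
  have hderiv : deriv f =ᶠ[𝓝 a] f' := hf.mono fun t ht => ht.deriv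
  have hb : deriv (deriv f) a = b := hderiv.deriv_eq.trans hf'.deriv
  by_contra! hpos
  have hmin : IsLocalMin f a := isLocalMin_of_deriv_deriv_pos (hb ▸ hpos) h.deriv_eq_zero
    hf.self_of_nhds.continuousAt
  -- `f` is then both a local maximum and a local minimum at `a`, so it is locally constant
  have hconst : f =ᶠ[𝓝 a] fun _ => f a := (h.and hmin).mono fun t ht => le_antisymm ht.1 ht.2
  have : deriv (deriv f) a = 0 := by
    rw [hconst.deriv.deriv_eq]
    simp
  linarith

section Line

variable {E : Type*} [NormedAddCommGroup E] [NormedSpace ℝ E] {f : E → ℝ} {x : E}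

theorem hasDerivAt_add_smul (x v : E) (t : ℝ) : HasDerivAt (fun t : ℝ => x + t • v) v t :=
  ((hasDerivAt_id t).smul_const v).const_add x |>.congr_deriv (one_smul ℝ v)

theorem ContDiffAt.eventually_hasDerivAt_comp_line (hf : ContDiffAt ℝ 1 f x) (v : E) :
    ∀ᶠ t in 𝓝 (0 : ℝ), HasDerivAt (fun t => f (x + t • v)) (fderiv ℝ f (x + t • v) v) t := by
  have hline : Tendsto (fun t : ℝ => x + t • v) (𝓝 0) (𝓝 x) := by
    simpa using (hasDerivAt_add_smul x v 0).continuousAt.tendsto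
  filter_upwards [hline.eventually (hf.eventually (by simp))] with t ht
  exact (ht.differentiableAt one_ne_zero).hasFDerivAt.comp_hasDerivAt t (hasDerivAt_add_smul x v t)

theorem ContDiffAt.hasDerivAt_fderiv_comp_line (hf : ContDiffAt ℝ 2 f x) (v : E) :
    HasDerivAt (fun t : ℝ => fderiv ℝ f (x + t • v) v) (fderiv ℝ (fderiv ℝ f) x v v) 0 := by
  have hC1 : ContDiffAt ℝ 1 (fderiv ℝ f) x := hf.fderiv_right (m := 1) (by norm_num)
  have hdf : HasFDerivAt (fderiv ℝ f) (fderiv ℝ (fderiv ℝ f) x) (x + (0 : ℝ) • v) := by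
    rw [zero_smul, add_zero]
    exact (hC1.differentiableAt one_ne_zero).hasFDerivAt
  have h1 := hdf.comp_hasDerivAt (0 : ℝ) (hasDerivAt_add_smul x v 0)
  have := h1.clm_apply (hasDerivAt_const (0 : ℝ) v)
  simpa only [map_zero, add_zero, zero_smul, Function.comp_def] using this

theorem IsLocalMax.comp_line (h : IsLocalMax f x) (v : E) :
    IsLocalMax (fun t : ℝ => f (x + t • v)) 0 := by
  have h0 : IsLocalMax f (x + (0 : ℝ) • v) := by rwa [zero_smul, add_zero]
  exact h0.comp_continuous (g := fun t : ℝ => x + t • v) (hasDerivAt_add_smul x v 0).continuousAt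

end Line

section NormSq

open RealInnerProductSpace

variable {E : Type*} [NormedAddCommGroup E] [InnerProductSpace ℝ E] {u : E → ℝ} {x : E}

theorem ContDiffAt.eventually_hasDerivAt_comp_line_mul_norm_sq (hu : ContDiffAt ℝ 1 u x)
    (v : E) : ∀ᶠ t in 𝓝 (0 : ℝ), HasDerivAt (fun t => u (x + t • v) * ‖x + t • v‖ ^ 2)
      (fderiv ℝ u (x + t • v) v * ‖x + t • v‖ ^ 2 + u (x + t • v) * (2 * ⟪x + t • v, v⟫)) t := by
  filter_upwards [hu.eventually_hasDerivAt_comp_line v] with t ht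
  exact ht.mul (hasDerivAt_add_smul x v t).norm_sq

theorem IsLocalMax.fderiv_mul_norm_sq_add_eq_zero (hu : ContDiffAt ℝ 1 u x)
    (hmax : IsLocalMax (fun y => u y * ‖y‖ ^ 2) x) (v : E) :
    fderiv ℝ u x v * ‖x‖ ^ 2 + 2 * u x * ⟪x, v⟫ = 0 := by
  have := (hmax.comp_line v).hasDerivAt_eq_zero
    (hu.eventually_hasDerivAt_comp_line_mul_norm_sq v).self_of_nhds
  simp only [zero_smul, add_zero] at this
  linarith

theorem IsLocalMax.fderiv_fderiv_mul_norm_sq_add_nonpos (hu : ContDiffAt ℝ 2 u x)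
    (hmax : IsLocalMax (fun y => u y * ‖y‖ ^ 2) x) (v : E) :
    fderiv ℝ (fderiv ℝ u) x v v * ‖x‖ ^ 2 + 4 * fderiv ℝ u x v * ⟪x, v⟫ + 2 * u x * ‖v‖ ^ 2
      ≤ 0 := by
  have hu1 : ContDiffAt ℝ 1 u x := hu.of_le one_le_two
  have hline := hasDerivAt_add_smul x v 0
  have hG' := ((hu.hasDerivAt_fderiv_comp_line v).mul hline.norm_sq).add
    ((hu1.eventually_hasDerivAt_comp_line v).self_of_nhds.mul
      ((hline.inner ℝ (hasDerivAt_const 0 v)).const_mul 2))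
  have := (hmax.comp_line v).second_deriv_nonpos
    (hu1.eventually_hasDerivAt_comp_line_mul_norm_sq v) hG'
  simp only [zero_smul, add_zero, inner_zero_right, zero_add, real_inner_self_eq_norm_sq] at this
  linarith

end NormSq

open RealInnerProductSpace in
theorem EuclideanSpace.sum_apply_single_mul_inner {ι : Type*} [Fintype ι] [DecidableEq ι]
    (L : EuclideanSpace ℝ ι →L[ℝ] ℝ) (x : EuclideanSpace ℝ ι) :
    ∑ i, L (EuclideanSpace.single i 1) * ⟪x, EuclideanSpace.single i 1⟫ = L x := by
  conv_rhs => rw [← (EuclideanSpace.basisFun ι ℝ).sum_repr' x]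
  simp [mul_comm, real_inner_comm x]

theorem isCompact_annulus {E : Type*} [NormedAddCommGroup E] [ProperSpace E] (r R : ℝ) :
    IsCompact {x : E | r ≤ ‖x‖ ∧ ‖x‖ ≤ R} :=
  (isCompact_closedBall 0 R).of_isClosed_subset
    ((isClosed_le continuous_const continuous_norm).inter
      (isClosed_le continuous_norm continuous_const))
    fun _ hx => mem_closedBall_zero_iff.2 hx.2

theorem IsLocalMax.laplacian_mul_norm_sq_add_nonpos {u : EuclideanSpace ℝ (Fin 6) → ℝ}
    {x : EuclideanSpace ℝ (Fin 6)} (hx : x ≠ 0) (hu : ContDiffAt ℝ 2 u x)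
    (hmax : IsLocalMax (fun y => u y * ‖y‖ ^ 2) x) :
    laplacian u x * ‖x‖ ^ 2 + 4 * u x ≤ 0 := by
  have hsum := Finset.sum_nonpos fun i (_ : i ∈ Finset.univ) =>
    hmax.fderiv_fderiv_mul_norm_sq_add_nonpos hu (EuclideanSpace.single i 1)
  have hlap : ∑ i : Fin 6, fderiv ℝ (fderiv ℝ u) x (EuclideanSpace.single i 1)
      (EuclideanSpace.single i 1) = laplacian u x := by
    simp [laplacian, iteratedFDeriv_two_apply]
  have hradial : fderiv ℝ u x x = -2 * u x := by
    have h := hmax.fderiv_mul_norm_sq_add_eq_zero (hu.of_le one_le_two) x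
    rw [real_inner_self_eq_norm_sq] at h
    have : ‖x‖ ^ 2 ≠ 0 := by positivity
    exact mul_right_cancel₀ this (by linarith)
  simp only [Finset.sum_add_distrib, ← Finset.sum_mul, mul_assoc, ← Finset.mul_sum, hlap,
    EuclideanSpace.sum_apply_single_mul_inner, hradial, PiLp.norm_single, norm_one, one_pow,
    mul_one, Finset.sum_const, Finset.card_univ, Fintype.card_fin, nsmul_eq_mul, Nat.cast_ofNat] at hsum
  linarith

theorem annulus_maximum_principle_general (σ R : ℝ) (hσ4 : σ < 4)
    (u : EuclideanSpace ℝ (Fin 6) → ℝ)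
    (hcont : ContinuousOn u {x | 1 ≤ ‖x‖ ∧ ‖x‖ ≤ R})
    (hC2 : ContDiffOn ℝ 2 u {x | 1 < ‖x‖ ∧ ‖x‖ < R})
    (hsub : ∀ x : EuclideanSpace ℝ (Fin 6), 1 < ‖x‖ → ‖x‖ < R →
      0 ≤ laplacian u x + σ * ‖x‖ ^ (-2 : ℝ) * u x)
    (hb1 : ∀ x : EuclideanSpace ℝ (Fin 6), ‖x‖ = 1 → u x ≤ 0)
    (hbR : ∀ x : EuclideanSpace ℝ (Fin 6), ‖x‖ = R → u x ≤ 0) :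
    ∀ x : EuclideanSpace ℝ (Fin 6), 1 ≤ ‖x‖ → ‖x‖ ≤ R → u x ≤ 0 := by
  intro x hx1 hxR
  by_contra! hux
  obtain ⟨x₀, hx₀A, hx₀max⟩ := (isCompact_annulus 1 R).exists_isMaxOn ⟨x, hx1, hxR⟩
    (hcont.mul (continuous_norm.pow 2).continuousOn)
  have hu₀ : 0 < u x₀ :=
    pos_of_mul_pos_left ((mul_pos hux (pow_pos (by linarith) 2)).trans_le (hx₀max ⟨hx1, hxR⟩))
      (sq_nonneg ‖x₀‖)
  have hx₀S : 1 < ‖x₀‖ ∧ ‖x₀‖ < R :=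
    ⟨hx₀A.1.lt_of_ne fun h => (hb1 x₀ h.symm).not_gt hu₀,
      hx₀A.2.lt_of_ne fun h => (hbR x₀ h).not_gt hu₀⟩
  have hS : IsOpen {x : EuclideanSpace ℝ (Fin 6) | 1 < ‖x‖ ∧ ‖x‖ < R} :=
    (isOpen_lt continuous_const continuous_norm).inter (isOpen_lt continuous_norm continuous_const)
  have hmax : IsLocalMax (fun y => u y * ‖y‖ ^ 2) x₀ := hx₀max.isLocalMax <|
    mem_of_superset (hS.mem_nhds hx₀S) fun y hy => ⟨hy.1.le, hy.2.le⟩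
  have hΔ := hmax.laplacian_mul_norm_sq_add_nonpos (norm_pos_iff.1 (by linarith))
    (hC2.contDiffAt (hS.mem_nhds hx₀S))
  have hsub₀ : 0 ≤ laplacian u x₀ * ‖x₀‖ ^ 2 + σ * u x₀ := by
    have h := mul_nonneg (hsub x₀ hx₀S.1 hx₀S.2) (sq_nonneg ‖x₀‖)
    rwa [Real.rpow_neg (norm_nonneg _), Real.rpow_two, add_mul, mul_right_comm _ (u x₀),
      mul_assoc σ, inv_mul_cancel₀ (pow_ne_zero 2 (by linarith)), mul_one] at h
  linarith [mul_pos (sub_pos.2 hσ4) hu₀]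

/-- Maximum principle for `Δ + σ r⁻²` (with `0 ≤ σ < 4`) on the annulus
`1 ≤ ‖x‖ ≤ R` in `ℝ⁶`: a subsolution which is `≤ 0` on both boundary spheres
is `≤ 0` throughout. -/
theorem annulus_maximum_principle (σ R : ℝ) (hσ0 : 0 ≤ σ) (hσ4 : σ < 4) (hR : 1 < R)
    (u : EuclideanSpace ℝ (Fin 6) → ℝ)
    (hcont : ContinuousOn u {x | 1 ≤ ‖x‖ ∧ ‖x‖ ≤ R})
    (hC2 : ContDiffOn ℝ 2 u {x | 1 < ‖x‖ ∧ ‖x‖ < R})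
    (hsub : ∀ x : EuclideanSpace ℝ (Fin 6), 1 < ‖x‖ → ‖x‖ < R →
      0 ≤ laplacian u x + σ * ‖x‖ ^ (-2 : ℝ) * u x)
    (hb1 : ∀ x : EuclideanSpace ℝ (Fin 6), ‖x‖ = 1 → u x ≤ 0)
    (hbR : ∀ x : EuclideanSpace ℝ (Fin 6), ‖x‖ = R → u x ≤ 0) :
    ∀ x : EuclideanSpace ℝ (Fin 6), 1 ≤ ‖x‖ → ‖x‖ ≤ R → u x ≤ 0 :=
  annulus_maximum_principle_general σ R hσ4 u hcont hC2 hsub hb1 hbR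
end

section
/- Work in six-dimensional Euclidean space ℝ^6, and let Δ denote the Laplacian (the trace of the Hessian). Let f : ℝ^6 \ {0} → ℝ be a nonnegative twice continuously differentiable function that is homogeneous of degree -2 (i.e. f(t•x) = t^{-2}·f(x) for all t > 0 and x ≠ 0) and satisfies the differential inequality Δf(x) ≥ -f(x)^2 for all x ≠ 0. Let m be the maximum value of f on the unit sphere {x : ‖x‖ = 1}. Then 4m ≤ m^2; in particular either m = 0 (so f ≡ 0) or m ≥ 4. -/
open Filter Topology

theorem IsLocalMax.deriv_deriv_nonpos {φ : ℝ → ℝ} {a : ℝ} (h : IsLocalMax φ a)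
    (hc : ContinuousAt φ a) : deriv (deriv φ) a ≤ 0 := by
  by_contra! hpos
  -- the second derivative test makes `a` also a local minimum, so `φ` is constant near `a`
  have hconst : φ =ᶠ[𝓝 a] fun _ => φ a :=
    ((isLocalMin_of_deriv_deriv_pos hpos h.deriv_eq_zero hc).and h).mono
      fun _ hx => le_antisymm hx.2 hx.1
  have hzero : deriv (deriv φ) a = 0 := by
    rw [hconst.deriv.deriv_eq]
    simp
  exact hpos.ne' hzero

section Hessian

variable {E F : Type*} [NormedAddCommGroup E] [NormedSpace ℝ E]
  [NormedAddCommGroup F] [NormedSpace ℝ F]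

theorem deriv_deriv_apply_add_smul {g : E → F} {p : E} (hg : ContDiffAt ℝ 2 g p) (v : E) :
    deriv (deriv fun t : ℝ => g (p + t • v)) 0 = iteratedFDeriv ℝ 2 g p ![v, v] := by
  have hline (t : ℝ) : HasDerivAt (fun s : ℝ => p + s • v) v t := by
    simpa using ((hasDerivAt_id t).smul_const v).const_add p
  have hnear : ∀ᶠ t in 𝓝 (0 : ℝ), ContDiffAt ℝ 2 g (p + t • v) := by
    have htends : Tendsto (fun t : ℝ => p + t • v) (𝓝 0) (𝓝 p) := by
      simpa using (hline 0).continuousAt.tendsto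
    exact htends.eventually (hg.eventually (by simp))
  have hfirst : deriv (fun t : ℝ => g (p + t • v)) =ᶠ[𝓝 0]
      fun t => fderiv ℝ g (p + t • v) v := by
    filter_upwards [hnear] with t ht
    exact ((ht.differentiableAt (by simp)).hasFDerivAt.comp_hasDerivAt t (hline t)).deriv
  have hsecond : HasDerivAt (fun t : ℝ => fderiv ℝ g (p + t • v) v)
      (fderiv ℝ (fderiv ℝ g) p v v) 0 := by
    have hdiff : HasFDerivAt (fderiv ℝ g) (fderiv ℝ (fderiv ℝ g) p) (p + (0 : ℝ) • v) := by
      rw [zero_smul, add_zero]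
      exact ((hg.fderiv_right (m := 1) le_rfl).differentiableAt one_ne_zero).hasFDerivAt
    have hcomp : HasDerivAt (fun t : ℝ => fderiv ℝ g (p + t • v)) (fderiv ℝ (fderiv ℝ g) p v) 0 :=
      hdiff.comp_hasDerivAt 0 (hline 0)
    simpa using hcomp.clm_apply (hasDerivAt_const (0 : ℝ) v)
  rw [hfirst.deriv_eq, hsecond.deriv, iteratedFDeriv_two_apply]
  simp

theorem IsLocalMax.iteratedFDeriv_two_nonpos {g : E → ℝ} {p : E} (h : IsLocalMax g p)
    (hg : ContDiffAt ℝ 2 g p) (v : E) : iteratedFDeriv ℝ 2 g p ![v, v] ≤ 0 := by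
  rw [← deriv_deriv_apply_add_smul hg]
  have hline : Continuous fun t : ℝ => p + t • v := by fun_prop
  refine IsLocalMax.deriv_deriv_nonpos ?_ ?_
  · exact IsLocalMax.comp_continuous (by simpa using h) hline.continuousAt
  · exact ContinuousAt.comp (by simpa using hg.continuousAt) hline.continuousAt

end Hessian

theorem deriv_deriv_inv_quadratic {a b c : ℝ} (hc : c ≠ 0) :
    deriv (deriv fun t : ℝ => (c + 2 * b * t + a * t ^ 2)⁻¹) 0 =
      (8 * b ^ 2 - 2 * a * c) / c ^ 3 := by
  set q : ℝ → ℝ := fun t => c + 2 * b * t + a * t ^ 2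
  have hq (t : ℝ) : HasDerivAt q (2 * b + 2 * a * t) t :=
    ((((hasDerivAt_id t).const_mul (2 * b)).const_add c).add
      ((hasDerivAt_pow 2 t).const_mul a)).congr_deriv
      (by simp only [mul_one, Nat.cast_ofNat, Nat.add_one_sub_one, pow_one]; ring)
  have hq0 : q 0 = c := by simp [q]
  have hnear : ∀ᶠ t in 𝓝 (0 : ℝ), q t ≠ 0 :=
    (hq 0).continuousAt.eventually_ne (hq0 ▸ hc)
  have hfirst : deriv (fun t => (q t)⁻¹) =ᶠ[𝓝 0] fun t => -(2 * b + 2 * a * t) / q t ^ 2 := by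
    filter_upwards [hnear] with t ht
    exact ((hq t).inv ht).deriv
  have hnum : HasDerivAt (fun t : ℝ => -(2 * b + 2 * a * t)) (-(2 * a)) 0 :=
    (((hasDerivAt_id (0 : ℝ)).const_mul (2 * a)).const_add (2 * b)).neg.congr_deriv (by simp)
  have hsecond : HasDerivAt (fun t => -(2 * b + 2 * a * t) / q t ^ 2)
      ((8 * b ^ 2 - 2 * a * c) / c ^ 3) 0 := by
    refine (hnum.div ((hq 0).pow 2) (by simp [hq0, hc])).congr_deriv ?_
    simp only [Pi.pow_apply, hq0]
    field_simp
    ring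
  rw [hfirst.deriv_eq, hsecond.deriv]

section InvNormSq

variable {E : Type*} [NormedAddCommGroup E] [InnerProductSpace ℝ E]

theorem contDiffAt_inv_norm_sq {x : E} (hx : x ≠ 0) {n : WithTop ℕ∞} :
    ContDiffAt ℝ n (fun y : E => (‖y‖ ^ 2)⁻¹) x :=
  (contDiff_norm_sq ℝ).contDiffAt.inv (by positivity)

theorem iteratedFDeriv_two_inv_norm_sq {x : E} (hx : x ≠ 0) (v : E) :
    iteratedFDeriv ℝ 2 (fun y : E => (‖y‖ ^ 2)⁻¹) x ![v, v] =
      (8 * inner ℝ x v ^ 2 - 2 * ‖v‖ ^ 2 * ‖x‖ ^ 2) / ‖x‖ ^ 6 := by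
  rw [← deriv_deriv_apply_add_smul (contDiffAt_inv_norm_sq hx)]
  have hline : (fun t : ℝ => (‖x + t • v‖ ^ 2)⁻¹) =
      fun t => (‖x‖ ^ 2 + 2 * inner ℝ x v * t + ‖v‖ ^ 2 * t ^ 2)⁻¹ := by
    ext t
    rw [norm_add_sq_real, real_inner_smul_right, norm_smul, mul_pow, Real.norm_eq_abs, sq_abs]
    ring
  rw [hline, deriv_deriv_inv_quadratic (by positivity)]
  ring

end InvNormSq

section Laplacian

variable {f g : EuclideanSpace ℝ (Fin 6) → ℝ} {x : EuclideanSpace ℝ (Fin 6)}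

theorem laplacian_const_mul (c : ℝ) (hf : ContDiffAt ℝ 2 f x) :
    laplacian (fun y => c * f y) x = c * laplacian f x := by
  simp only [laplacian, ← smul_eq_mul, iteratedFDeriv_const_smul_apply' hf,
    smul_apply, Finset.smul_sum]

theorem laplacian_le_of_isLocalMax_sub (hf : ContDiffAt ℝ 2 f x) (hg : ContDiffAt ℝ 2 g x)
    (h : IsLocalMax (f - g) x) : laplacian f x ≤ laplacian g x := by
  refine Finset.sum_le_sum fun i _ => ?_
  have := h.iteratedFDeriv_two_nonpos (hf.sub hg) (EuclideanSpace.single i 1)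
  rw [iteratedFDeriv_sub_apply hf hg, sub_apply] at this
  linarith

theorem laplacian_inv_norm_sq (hx : x ≠ 0) :
    laplacian (fun y => (‖y‖ ^ 2)⁻¹) x = -4 / ‖x‖ ^ 4 := by
  simp only [laplacian, iteratedFDeriv_two_inv_norm_sq hx, EuclideanSpace.inner_single_right,
    PiLp.norm_single, norm_one, conj_trivial, one_mul, one_pow, mul_one]
  rw [← Finset.sum_div, Finset.sum_sub_distrib, ← Finset.mul_sum,
    ← EuclideanSpace.real_norm_sq_eq, Finset.sum_const, Finset.card_univ, Fintype.card_fin]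
  field_simp
  ring

end Laplacian

theorem le_mul_norm_zpow_of_homogeneous {E : Type*} [NormedAddCommGroup E] [NormedSpace ℝ E]
    {f : E → ℝ} {k : ℤ} {m : ℝ}
    (hhom : ∀ t : ℝ, 0 < t → ∀ x : E, x ≠ 0 → f (t • x) = t ^ k * f x)
    (hmax : ∀ x : E, ‖x‖ = 1 → f x ≤ m) {x : E} (hx : x ≠ 0) : f x ≤ m * ‖x‖ ^ k := by
  have hnx : 0 < ‖x‖ := norm_pos_iff.2 hx
  have hu : ‖‖x‖⁻¹ • x‖ = 1 := by
    rw [norm_smul, norm_inv, norm_norm, inv_mul_cancel₀ hnx.ne']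
  have hu0 : ‖x‖⁻¹ • x ≠ 0 := by
    rintro h
    simp [h] at hu
  calc f x = f (‖x‖ • ‖x‖⁻¹ • x) := by rw [smul_smul, mul_inv_cancel₀ hnx.ne', one_smul]
    _ = ‖x‖ ^ k * f (‖x‖⁻¹ • x) := hhom _ hnx _ hu0
    _ ≤ ‖x‖ ^ k * m := by gcongr; exact hmax _ hu
    _ = m * ‖x‖ ^ k := mul_comm _ _

/-- Rigidity computation from Proposition 5: a nonnegative `C²` function on
`ℝ⁶ \ {0}` that is homogeneous of degree `-2` and satisfies `Δf ≥ -f²` has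
maximum `m` on the unit sphere obeying `4m ≤ m²`, so `m = 0` or `m ≥ 4`. -/
theorem cone_curvature_rigidity
    (f : EuclideanSpace ℝ (Fin 6) → ℝ)
    (hC2 : ContDiffOn ℝ 2 f {(0 : EuclideanSpace ℝ (Fin 6))}ᶜ)
    (hnn : ∀ x : EuclideanSpace ℝ (Fin 6), x ≠ 0 → 0 ≤ f x)
    (hhom : ∀ t : ℝ, 0 < t → ∀ x : EuclideanSpace ℝ (Fin 6), x ≠ 0 →
      f (t • x) = t ^ (-2 : ℤ) * f x)
    (hineq : ∀ x : EuclideanSpace ℝ (Fin 6), x ≠ 0 → -(f x) ^ 2 ≤ laplacian f x)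
    (m : ℝ) (p : EuclideanSpace ℝ (Fin 6)) (hp : ‖p‖ = 1) (hpm : f p = m)
    (hmax : ∀ x : EuclideanSpace ℝ (Fin 6), ‖x‖ = 1 → f x ≤ m) :
    4 * m ≤ m ^ 2 ∧ (m = 0 ∨ 4 ≤ m) := by
  have hp0 : p ≠ 0 := by
    rintro rfl
    simp at hp
  set g : EuclideanSpace ℝ (Fin 6) → ℝ := fun x => m * (‖x‖ ^ 2)⁻¹
  have htouch : IsLocalMax (f - g) p := by
    filter_upwards [isOpen_compl_singleton.mem_nhds hp0] with x hx
    have hle := le_mul_norm_zpow_of_homogeneous hhom hmax hx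
    simp only [Pi.sub_apply, g, hp, hpm, zpow_neg, zpow_ofNat] at hle ⊢
    linarith
  have hf : ContDiffAt ℝ 2 f p := hC2.contDiffAt (isOpen_compl_singleton.mem_nhds hp0)
  have hg : ContDiffAt ℝ 2 g p := contDiffAt_const.mul (contDiffAt_inv_norm_sq hp0)
  have hlap : laplacian f p ≤ -4 * m :=
    calc laplacian f p ≤ laplacian g p := laplacian_le_of_isLocalMax_sub hf hg htouch
      _ = -4 * m := by
        rw [laplacian_const_mul m (contDiffAt_inv_norm_sq hp0), laplacian_inv_norm_sq hp0, hp]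
        ring
  have h4m : 4 * m ≤ m ^ 2 := by
    have := hineq p hp0
    rw [hpm] at this
    linarith
  refine ⟨h4m, ?_⟩
  rcases (hpm ▸ hnn p hp0 : 0 ≤ m).eq_or_lt with hm | hm
  · exact Or.inl hm.symm
  · exact Or.inr (by nlinarith)
end
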